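/- Binomial transform of a J-fraction: if ∑ a_n t^n is given by the J-fraction 1/(1 - γ_0 t - β_1 t²/(1 - γ_1 t - β_2 t²/(1 - ...))) as formal power series, then the ξ-binomial transform b_n = ∑_{k=0}^n C(n,k) a_k ξ^{n-k} satisfies ∑ b_n t^n = 1/(1 - (γ_0+ξ) t - β_1 t²/(1 - (γ_1+ξ) t - β_2 t²/(1 - ...))). -/

import Mathlib

open PowerSeries Finset

/-- Depth-`d` truncation of the J-fraction starting at level `i`. -/
noncomputable def jfrac (γ β : ℕ → ℝ) : ℕ → ℕ → PowerSeries ℝ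
  | 0, _ => 1
  | d + 1, i => (1 - PowerSeries.C (γ i) * PowerSeries.X
      - PowerSeries.C (β (i + 1)) * PowerSeries.X ^ 2 * jfrac γ β d (i + 1))⁻¹

/-!
With `A(t) = ∑ aₙ tⁿ`, the binomial transform is `∑ bₙ tⁿ = A(u) / (1 - ξt)` for
`u = t / (1 - ξt)`.
Since `(1 - ξt) u = t`, substituting `u` into one level `1 / (1 - γ t - β t² J(t))` of the
J-fraction and dividing by `1 - ξt` gives `1 / (1 - (γ + ξ) t - β t² · J(u) / (1 - ξt))`: the
shifted J-fraction with the transformed tail. At depth `0` the two sides are `1` and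
`1 / (1 - ξt)`, which differ at order `1`, and every level pushes the discrepancy two orders up,
so the depth-`d` truncations agree below order `2d + 1`.
-/

namespace PowerSeries

theorem X_pow_dvd_subst {R : Type*} [CommRing R] {a f : R⟦X⟧} {m : ℕ}
    (ha : constantCoeff a = 0) (hf : X ^ m ∣ f) : X ^ m ∣ subst a f := by
  obtain ⟨g, rfl⟩ := hf
  have ha' := HasSubst.of_constantCoeff_zero' ha
  rw [subst_mul ha', subst_pow ha', subst_X ha']
  exact (pow_dvd_pow_of_dvd (X_dvd_iff.mpr ha) m).mul_right _

section Field

variable {K : Type*} [Field K]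

theorem X_pow_dvd_inv_sub_inv {m : ℕ} {f g : K⟦X⟧} (hf : constantCoeff f ≠ 0)
    (h : X ^ m ∣ f - g) : X ^ m ∣ f⁻¹ - g⁻¹ := by
  rcases Nat.eq_zero_or_pos m with rfl | hm
  · simp
  have hg : constantCoeff g = constantCoeff f := by
    have := X_pow_dvd_iff.mp h 0 hm
    rwa [map_sub, sub_eq_zero, coeff_zero_eq_constantCoeff_apply,
      coeff_zero_eq_constantCoeff_apply, eq_comm] at this
  have key : f⁻¹ - g⁻¹ = -(f⁻¹ * g⁻¹ * (f - g)) := by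
    linear_combination g⁻¹ * PowerSeries.inv_mul_cancel f hf
      - f⁻¹ * PowerSeries.inv_mul_cancel g (hg ▸ hf)
  rw [key, dvd_neg]
  exact h.mul_left _

theorem map_inv_of_constantCoeff_ne_zero {F : Type*} [FunLike F K⟦X⟧ K⟦X⟧]
    [RingHomClass F K⟦X⟧ K⟦X⟧] (φ : F) {f : K⟦X⟧}
    (hf : constantCoeff f ≠ 0) : φ f⁻¹ = (φ f)⁻¹ := by
  have h : φ f⁻¹ * φ f = 1 := by rw [← map_mul, PowerSeries.inv_mul_cancel f hf, map_one]
  have hφf : constantCoeff (φ f) ≠ 0 :=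
    right_ne_zero_of_mul_eq_one (by rw [← map_mul, h, map_one])
  exact (eq_inv_iff_mul_eq_one hφf).mpr h

variable (ξ : K)

noncomputable def geom : K⟦X⟧ := (1 - C ξ * X)⁻¹

noncomputable def geomX : K⟦X⟧ := X * geom ξ

theorem one_sub_C_mul_X_mul_geom : (1 - C ξ * X) * geom ξ = 1 :=
  PowerSeries.mul_inv_cancel _ (by simp)

theorem geom_pow_succ (k : ℕ) :
    geom ξ ^ (k + 1) = mk fun n => ξ ^ n * ((k + n).choose k : K) := by
  have h := congrArg (rescale ξ) (invOneSubPow K (k + 1)).inv_val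
  rw [invOneSubPow_inv_eq_one_sub_pow, invOneSubPow_val_succ_eq_mk_add_choose, map_mul,
    map_pow, map_sub, map_one, rescale_X, rescale_mk] at h
  have h' := congrArg (· ^ (k + 1)) (one_sub_C_mul_X_mul_geom ξ)
  simp only [mul_pow, one_pow] at h'
  linear_combination (-geom ξ ^ (k + 1)) * h + (mk fun n => ξ ^ n * ((k + n).choose k : K)) * h'

theorem coeff_geom_mul_geomX_pow (k n : ℕ) :
    coeff n (geom ξ * geomX ξ ^ k) = n.choose k * ξ ^ (n - k) := by
  rw [geomX, mul_pow, mul_left_comm, ← pow_succ', geom_pow_succ, coeff_X_pow_mul']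
  split_ifs with h
  · rw [coeff_mk, Nat.add_sub_cancel' h, mul_comm]
  · rw [Nat.choose_eq_zero_of_lt (not_le.mp h), Nat.cast_zero, zero_mul]

theorem constantCoeff_geomX : constantCoeff (geomX ξ) = 0 := by simp [geomX]

theorem hasSubst_geomX : HasSubst (geomX ξ) :=
  HasSubst.of_constantCoeff_zero' (constantCoeff_geomX ξ)

theorem coeff_geom_mul_subst_geomX (f : K⟦X⟧) (n : ℕ) :
    coeff n (geom ξ * subst (geomX ξ) f) =
      ∑ k ∈ range (n + 1), (n.choose k : K) * coeff k f * ξ ^ (n - k) := by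
  have hu := hasSubst_geomX ξ
  set tail : K⟦X⟧ := X ^ (n + 1) * mk fun i ↦ coeff (i + (n + 1)) f
  have hsplit : subst (geomX ξ) f =
      subst (geomX ξ) tail + subst (geomX ξ) (trunc (n + 1) f : K⟦X⟧) := by
    rw [← subst_add hu, ← eq_X_pow_mul_shift_add_trunc]
  have htail : coeff n (geom ξ * subst (geomX ξ) tail) = 0 :=
    X_pow_dvd_iff.mp ((X_pow_dvd_subst (constantCoeff_geomX ξ) (dvd_mul_right _ _)).mul_left _) n
      (Nat.lt_succ_self n)
  rw [hsplit, mul_add, map_add, htail, zero_add, subst_coe hu,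
    Polynomial.aeval_eq_sum_range' (natDegree_trunc_lt f n), mul_sum, map_sum]
  refine sum_congr rfl fun k hk => ?_
  rw [mul_smul_comm, coeff_smul, coeff_geom_mul_geomX_pow, coeff_trunc, if_pos (mem_range.mp hk),
    smul_eq_mul]
  ring

end Field

end PowerSeries

theorem X_pow_dvd_jfrac_add_sub_geom_mul_subst_geomX (ξ : ℝ) (γ β : ℕ → ℝ) (d i : ℕ) :
    X ^ (2 * d + 1) ∣
      jfrac (fun j => γ j + ξ) β d i - geom ξ * subst (geomX ξ) (jfrac γ β d i) := by
  have hu := hasSubst_geomX ξ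
  induction d generalizing i with
  | zero =>
    rw [jfrac, jfrac, ← coe_substAlgHom hu, map_one, mul_one, pow_one, X_dvd_iff]
    simp [geom]
  | succ d ih =>
    rw [jfrac, jfrac]
    set J := jfrac γ β d (i + 1)
    set J' := jfrac (fun j => γ j + ξ) β d (i + 1)
    have hden : subst (geomX ξ) (1 - C (γ i) * X - C (β (i + 1)) * X ^ 2 * J) =
        1 - C (γ i) * geomX ξ - C (β (i + 1)) * geomX ξ ^ 2 * subst (geomX ξ) J := by
      rw [← coe_substAlgHom hu]
      simp only [map_sub, map_one, map_mul, map_pow, substAlgHom_X, C_eq_algebraMap,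
        AlgHom.commutes]
    rw [← coe_substAlgHom hu, map_inv_of_constantCoeff_ne_zero _ (by simp), coe_substAlgHom, hden,
      geom, ← PowerSeries.mul_inv_rev]
    refine X_pow_dvd_inv_sub_inv (by simp) ?_
    set S := subst (geomX ξ) J
    have key : 1 - C (γ i + ξ) * X - C (β (i + 1)) * X ^ 2 * J'
        - (1 - C (γ i) * geomX ξ - C (β (i + 1)) * geomX ξ ^ 2 * S) * (1 - C ξ * X)
        = -(C (β (i + 1)) * X ^ 2 * (J' - geom ξ * S)) := by
      simp only [geomX, map_add]
      linear_combination (C (γ i) * X + C (β (i + 1)) * X ^ 2 * geom ξ * S) *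
        one_sub_C_mul_X_mul_geom ξ
    rw [key, dvd_neg, show 2 * (d + 1) + 1 = 2 + (2 * d + 1) by ring, pow_add]
    exact mul_dvd_mul (dvd_mul_left _ _) (ih _)

theorem stmt2 (ξ : ℝ) (a b γ β : ℕ → ℝ)
    (ha : ∀ N : ℕ, ∀ n < N, PowerSeries.coeff n (jfrac γ β N 0) = a n)
    (hb : ∀ n : ℕ, b n = ∑ k ∈ range (n + 1), (n.choose k : ℝ) * a k * ξ ^ (n - k)) :
    ∀ N : ℕ, ∀ n < N,
      PowerSeries.coeff n (jfrac (fun i => γ i + ξ) β N 0) = b n := by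
  intro N n hn
  have hcoeff :=
    X_pow_dvd_iff.mp (X_pow_dvd_jfrac_add_sub_geom_mul_subst_geomX ξ γ β N 0) n (by omega)
  rw [map_sub, sub_eq_zero] at hcoeff
  rw [hcoeff, coeff_geom_mul_subst_geomX, hb]
  refine sum_congr rfl fun k hk => ?_
  rw [ha N k (by grind)]
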